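/- arXiv:q-bio/0609027 — 2 statements merged into one kernel-verified Lean document; each statement's English description precedes it below -/
import Mathlib

section
/- Existence of a trajectory of minimum entropy T₁ for the positive–negative interaction: if g(x) < x·g'(0) for every x > 0, then for every b > 0 the section h_b(x) = x(f(x) + g(b)) + b(f(b) − g(x)) of the joint internal entropy production surface attains its minimum over [0, ∞) at some point x_b lying strictly inside (0, b), and any such minimizer satisfies f(x_b) + g(b) + x_b·f'(x_b) − b·g'(x_b) = 0. -/
/-!
Since `h_b'(0) = g b - b g'(0) < 0`, the section `h_b = entropySection f g b` decreases near `0`,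
while on `[b, ∞)` its derivative `f x + g b + x (f' - g')(x) + (x - b) g'(x)` is positive. Hence a
minimizer of `h_b` on the compact interval `[0, b]` lies in its interior and minimizes `h_b` on
all of `[0, ∞)`; Fermat's theorem then gives the stationarity equation.
-/

open Set

theorem HasDerivAt.nonneg_of_monotoneOn_Ici {φ : ℝ → ℝ} {d a x : ℝ} (hd : HasDerivAt φ d x)
    (hx : a ≤ x) (hφ : MonotoneOn φ (Ici a)) : 0 ≤ d :=
  hd.hasDerivWithinAt.nonneg_of_monotoneOn
    (accPt_principal_iff_nhdsWithin.2 (by rw [Ici_sdiff_left]; infer_instance))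
    (hφ.mono (Ici_subset_Ici.2 hx))

theorem IsMinOn.mul_sub_nonneg_of_hasDerivAt {φ : ℝ → ℝ} {s : Set ℝ} {c y d : ℝ}
    (hmin : IsMinOn φ s c) (hseg : segment ℝ c y ⊆ s) (hd : HasDerivAt φ d c) :
    0 ≤ d * (y - c) := by
  simpa [mul_comm] using hmin.localize.hasFDerivWithinAt_nonneg hd.hasFDerivAt.hasFDerivWithinAt
    (sub_mem_posTangentConeAt_of_segment_subset hseg)

theorem IsMinOn.isMinOn_Ici_of_monotoneOn {φ : ℝ → ℝ} {a b c : ℝ} (hmin : IsMinOn φ (Icc a b) c)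
    (hmono : MonotoneOn φ (Ici b)) (hab : a ≤ b) : IsMinOn φ (Ici a) c := by
  intro x (hx : a ≤ x)
  rcases le_total x b with hxb | hbx
  · exact hmin ⟨hx, hxb⟩
  · exact (hmin (right_mem_Icc.2 hab)).trans (hmono self_mem_Ici hbx hbx)

def entropySection (f g : ℝ → ℝ) (b x : ℝ) : ℝ := x * (f x + g b) + b * (f b - g x)

section EntropySection

variable {f g : ℝ → ℝ}

theorem hasDerivAt_entropySection {x : ℝ} (hf : DifferentiableAt ℝ f x)
    (hg : DifferentiableAt ℝ g x) (b : ℝ) :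
    HasDerivAt (entropySection f g b) (f x + g b + x * deriv f x - b * deriv g x) x := by
  have h := ((hasDerivAt_id x).mul (hf.hasDerivAt.add_const (g b))).add
    (((hasDerivAt_const x (f b)).sub hg.hasDerivAt).const_mul b)
  exact h.congr_deriv (by simp only [id]; ring)

theorem entropySection_deriv_pos_of_le (hf : Differentiable ℝ f) (hg : Differentiable ℝ g)
    (hf0 : f 0 = 0) (hg0 : g 0 = 0)
    (hfmono : StrictMonoOn f (Ici 0)) (hgmono : StrictMonoOn g (Ici 0))
    (hfg : StrictMonoOn (fun x => f x - g x) (Ici 0)) {b x : ℝ} (hb : 0 < b) (hbx : b ≤ x) :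
    0 < f x + g b + x * deriv f x - b * deriv g x := by
  have hx : 0 ≤ x := hb.le.trans hbx
  have hg' : 0 ≤ deriv g x := (hg x).hasDerivAt.nonneg_of_monotoneOn_Ici hx hgmono.monotoneOn
  have hfg' : 0 ≤ deriv f x - deriv g x :=
    ((hf x).hasDerivAt.sub (hg x).hasDerivAt).nonneg_of_monotoneOn_Ici hx hfg.monotoneOn
  have hfx : 0 < f x := hf0 ▸ hfmono self_mem_Ici hx (hb.trans_le hbx)
  have hgb : 0 < g b := hg0 ▸ hgmono self_mem_Ici hb.le hb
  nlinarith [mul_nonneg hx hfg', mul_le_mul_of_nonneg_right hbx hg']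

end EntropySection

theorem pn_T1_exists_general (f g : ℝ → ℝ)
    (hf : ContDiff ℝ 2 f) (hg : ContDiff ℝ 2 g)
    (hf0 : f 0 = 0) (hg0 : g 0 = 0)
    (hfmono : StrictMonoOn f (Set.Ici 0)) (hgmono : StrictMonoOn g (Set.Ici 0))
    (hfg : StrictMonoOn (fun x => f x - g x) (Set.Ici 0))
    (hg1 : ∀ x : ℝ, 0 < x → g x < x * deriv g 0)
    (b : ℝ) (hb : 0 < b) :
    (∃ xb ∈ Set.Ioo 0 b,
        IsMinOn (fun x => x * (f x + g b) + b * (f b - g x)) (Set.Ici 0) xb) ∧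
      ∀ xb ∈ Set.Ioo 0 b,
        IsMinOn (fun x => x * (f x + g b) + b * (f b - g x)) (Set.Ici 0) xb →
          f xb + g b + xb * deriv f xb - b * deriv g xb = 0 := by
  have hfd := hf.differentiable two_ne_zero
  have hgd := hg.differentiable two_ne_zero
  have hH x := hasDerivAt_entropySection (hfd x) (hgd x) b
  have hpos x := entropySection_deriv_pos_of_le hfd hgd hf0 hg0 hfmono hgmono hfg hb (x := x)
  refine ⟨?_, fun xb hxb hmin => (hmin.isLocalMin (Ici_mem_nhds hxb.1)).hasDerivAt_eq_zero (hH xb)⟩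
  have hcont : Continuous (entropySection f g b) := continuous_iff_continuousAt.2 fun x =>
    (hH x).continuousAt
  have hmono : MonotoneOn (entropySection f g b) (Ici b) :=
    monotoneOn_of_hasDerivWithinAt_nonneg (convex_Ici b) hcont.continuousOn
      (fun x _ => (hH x).hasDerivWithinAt) fun x hx => (hpos x (interior_subset hx)).le
  obtain ⟨c, hc, hcmin⟩ := isCompact_Icc.exists_isMinOn (nonempty_Icc.2 hb.le) hcont.continuousOn
  have hc0 : c ≠ 0 := by
    rintro rfl
    have h0 := hcmin.mul_sub_nonneg_of_hasDerivAt
      ((convex_Icc 0 b).segment_subset hc (right_mem_Icc.2 hb.le)) (hH 0)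
    nlinarith [hg1 b hb]
  have hcb : c ≠ b := by
    rintro rfl
    have hb' := hcmin.mul_sub_nonneg_of_hasDerivAt
      ((convex_Icc 0 c).segment_subset hc (left_mem_Icc.2 hb.le)) (hH c)
    nlinarith [hpos c le_rfl]
  exact ⟨c, ⟨hc.1.lt_of_ne' hc0, hc.2.lt_of_ne hcb⟩, hcmin.isMinOn_Ici_of_monotoneOn hmono hb.le⟩

theorem pn_T1_exists (f g : ℝ → ℝ)
    (hf : ContDiff ℝ 2 f) (hg : ContDiff ℝ 2 g)
    (hf0 : f 0 = 0) (hg0 : g 0 = 0)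
    (hfmono : StrictMonoOn f (Set.Ici 0)) (hgmono : StrictMonoOn g (Set.Ici 0))
    (hfg : StrictMonoOn (fun x => f x - g x) (Set.Ici 0))
    (hfg' : MonotoneOn (fun x => deriv f x - deriv g x) (Set.Ici 0))
    (hg1 : ∀ x : ℝ, 0 < x → g x < x * deriv g 0)
    (b : ℝ) (hb : 0 < b) :
    (∃ xb ∈ Set.Ioo 0 b,
        IsMinOn (fun x => x * (f x + g b) + b * (f b - g x)) (Set.Ici 0) xb) ∧
      ∀ xb ∈ Set.Ioo 0 b,
        IsMinOn (fun x => x * (f x + g b) + b * (f b - g x)) (Set.Ici 0) xb →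
          f xb + g b + xb * deriv f xb - b * deriv g xb = 0 :=
  pn_T1_exists_general f g hf hg hf0 hg0 hfmono hgmono hfg hg1 b hb
end

section
/- St. Matthew inequality for the trajectory T₂ of the positive–negative interaction: if x ≥ 0, y ≥ 0 with (x, y) ≠ (0, 0) satisfy the trajectory equation f(y) − g(x) + y·f'(y) + x·g'(y) = 0, then y < x; that is, along this trajectory of minimum entropy system x is always strictly ahead of system y with respect to thermodynamic equilibrium. -/
/-! If `x ≤ y` with `y > 0`, every term of the trajectory equation has a sign:
`f y - g x ≥ f y - g y > 0` because `g` and `f - g` increase from `0`, and `y f'(y)`, `x g'(y)`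
are nonnegative because `f` and `g` are nondecreasing. So the left-hand side is positive. -/

open Set Topology

lemma MonotoneOn.deriv_nonneg_of_mem_nhds {g : ℝ → ℝ} {s : Set ℝ} {x : ℝ}
    (hg : MonotoneOn g s) (hs : s ∈ 𝓝 x) : 0 ≤ deriv g x := by
  rw [← derivWithin_of_mem_nhds hs]
  exact hg.derivWithin_nonneg

lemma trajectory_lhs_pos_of_le {f g : ℝ → ℝ} (hf0 : f 0 = 0) (hg0 : g 0 = 0)
    (hfmono : MonotoneOn f (Ici 0)) (hgmono : MonotoneOn g (Ici 0))
    (hfg : StrictMonoOn (fun x => f x - g x) (Ici 0))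
    {x y : ℝ} (hx : 0 ≤ x) (hxy : x ≤ y) (hy : 0 < y) :
    0 < f y - g x + y * deriv f y + x * deriv g y := by
  have hnhds : Ici (0 : ℝ) ∈ 𝓝 y := Ici_mem_nhds hy
  have hgxy : g x ≤ g y := hgmono hx hy.le hxy
  have hgf : g y < f y := by
    simpa [hf0, hg0] using hfg self_mem_Ici hy.le hy
  have hdf : 0 ≤ y * deriv f y := mul_nonneg hy.le (hfmono.deriv_nonneg_of_mem_nhds hnhds)
  have hdg : 0 ≤ x * deriv g y := mul_nonneg hx (hgmono.deriv_nonneg_of_mem_nhds hnhds)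
  linarith

theorem pn_T2_st_matthew_general (f g : ℝ → ℝ)
    (hf0 : f 0 = 0) (hg0 : g 0 = 0)
    (hfmono : StrictMonoOn f (Set.Ici 0)) (hgmono : StrictMonoOn g (Set.Ici 0))
    (hfg : StrictMonoOn (fun x => f x - g x) (Set.Ici 0))
    (x y : ℝ) (hx : 0 ≤ x) (hy : 0 ≤ y) (hxy : (x, y) ≠ (0, 0))
    (htraj : f y - g x + y * deriv f y + x * deriv g y = 0) :
    y < x := by
  by_contra! hle
  have hy0 : 0 < y := by
    refine hy.lt_of_ne fun hy0 => hxy ?_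
    have hx0 : x = 0 := le_antisymm (hy0 ▸ hle) hx
    rw [hx0, ← hy0]
  have hpos := trajectory_lhs_pos_of_le hf0 hg0 hfmono.monotoneOn hgmono.monotoneOn hfg hx hle hy0
  exact hpos.ne' htraj

theorem pn_T2_st_matthew (f g : ℝ → ℝ)
    (hf : ContDiff ℝ 2 f) (hg : ContDiff ℝ 2 g)
    (hf0 : f 0 = 0) (hg0 : g 0 = 0)
    (hfmono : StrictMonoOn f (Set.Ici 0)) (hgmono : StrictMonoOn g (Set.Ici 0))
    (hfg : StrictMonoOn (fun x => f x - g x) (Set.Ici 0))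
    (hfg' : MonotoneOn (fun x => deriv f x - deriv g x) (Set.Ici 0))
    (x y : ℝ) (hx : 0 ≤ x) (hy : 0 ≤ y) (hxy : (x, y) ≠ (0, 0))
    (htraj : f y - g x + y * deriv f y + x * deriv g y = 0) :
    y < x :=
  pn_T2_st_matthew_general f g hf0 hg0 hfmono hgmono hfg x y hx hy hxy htraj
end
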